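/- arXiv:2111.13927 — 11 statements merged into one kernel-verified Lean document; each statement's English description precedes it below -/
import Mathlib

section
/- Let T : Multiset α be an analytic table, A : α → β an attribute, z₁ : α → κ₁ a grouping key, and p : κ₁ → κ₂ a map, so that z₂ := p ∘ z₁ is a coarser grouping key (the grouping set Z₂ is a subset of Z₁). Let F : Multiset β → γ be an aggregation function that is distributive using G : Multiset γ → γ. Then for every x : κ₂ such that the z₂-fiber T.filter (fun t => p (z₁ t) = x) is nonempty, aggregating A by z₂ directly equals first aggregating by z₁ with F and then aggregating by z₂ with G: F ((T.filter (fun t => p (z₁ t) = x)).map A) = G ((((T.map z₁).toFinset.filter (fun y => p y = x)).val).map (fun y => F ((T.filter (fun t => z₁ t = y)).map A))). (Function distributivity implies attribute summarizability.) -/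
lemma fiber_split {α κ₁ κ₂ : Type*} [DecidableEq κ₁] [DecidableEq κ₂]
    (z₁ : α → κ₁) (p : κ₁ → κ₂) (x : κ₂) (K : Finset κ₁)
    (hK : ∀ y ∈ K, p y = x) :
    ∀ T : Multiset α, (∀ t ∈ T, p (z₁ t) = x → z₁ t ∈ K) →
      T.filter (fun t => p (z₁ t) = x) = ∑ y ∈ K, T.filter (fun t => z₁ t = y) := by
  intro T
  induction T using Multiset.induction_on with
  | empty => simp
  | cons a s ih =>
    intro hT
    have hs : ∀ t ∈ s, p (z₁ t) = x → z₁ t ∈ K := fun t ht => hT t (by simp [ht])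
    simp only [Multiset.filter_cons, Finset.sum_add_distrib, ← ih hs]
    congr 1
    rw [Finset.sum_ite_eq K (z₁ a) (fun _ => ({a} : Multiset α))]
    by_cases h : p (z₁ a) = x
    · have : z₁ a ∈ K := hT a (by simp) h
      simp [h, this]
    · have : z₁ a ∉ K := fun hmem => h (hK _ hmem)
      simp [h, this]

/-- Function distributivity implies attribute summarizability. -/
theorem distributivity_implies_summarizability
    {α β γ κ₁ κ₂ : Type*} [DecidableEq κ₁] [DecidableEq κ₂]
    (T : Multiset α) (A : α → β) (z₁ : α → κ₁) (p : κ₁ → κ₂)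
    (F : Multiset β → γ) (G : Multiset γ → γ)
    (hdist : ∀ P : Multiset (Multiset β), P ≠ 0 → F P.join = G (P.map F)) :
    ∀ x : κ₂, T.filter (fun t => p (z₁ t) = x) ≠ 0 →
      F ((T.filter (fun t => p (z₁ t) = x)).map A)
        = G ((((T.map z₁).toFinset.filter (fun y => p y = x)).val).map
            (fun y => F ((T.filter (fun t => z₁ t = y)).map A))) := by
  intro x hne
  set K : Finset κ₁ := (T.map z₁).toFinset.filter (fun y => p y = x) with hKdef
  have hK : ∀ y ∈ K, p y = x := fun y hy => (Finset.mem_filter.mp hy).2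
  have hT : ∀ t ∈ T, p (z₁ t) = x → z₁ t ∈ K := by
    intro t ht hpt
    exact Finset.mem_filter.mpr ⟨Multiset.mem_toFinset.mpr (Multiset.mem_map_of_mem z₁ ht), hpt⟩
  have hsplit := fiber_split z₁ p x K hK T hT
  set P : Multiset (Multiset β) :=
    K.val.map (fun y => (T.filter (fun t => z₁ t = y)).map A) with hPdef
  have hPne : P ≠ 0 := by
    obtain ⟨t, ht⟩ := Multiset.exists_mem_of_ne_zero hne
    have ht' := Multiset.mem_filter.mp ht
    have : z₁ t ∈ K := hT t ht'.1 ht'.2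
    simp only [hPdef, Ne, Multiset.map_eq_zero]
    intro h
    rw [Finset.val_eq_zero] at h
    exact Finset.notMem_empty _ (h ▸ this)
  have hjoin : P.join = (T.filter (fun t => p (z₁ t) = x)).map A := by
    have hmap : Multiset.map A (∑ y ∈ K, T.filter (fun t => z₁ t = y))
        = ∑ y ∈ K, (T.filter (fun t => z₁ t = y)).map A :=
      map_sum (Multiset.mapAddMonoidHom A) (fun y => T.filter (fun t => z₁ t = y)) K
    rw [hsplit, hmap, hPdef, Multiset.join]
    rfl
  rw [← hjoin, hdist P hPne, hPdef, Multiset.map_map]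
  rfl
end

section
/- Let T : Multiset α be an analytic table, A : α → β an attribute, z₁ : α → κ₁ a grouping key, and p : κ₁ → κ₂ a map, so that z₂ := p ∘ z₁ is a coarser grouping key. Assume the literal functional dependency Z₂ ∪ {A} ↦ Z₁ holds in T, i.e., for all t₁, t₂ ∈ T, if p (z₁ t₁) = p (z₁ t₂) and A t₁ = A t₂ then z₁ t₁ = z₁ t₂. Then for every x : κ₂, the count of distinct A-values of the z₂-fiber equals the sum, over the distinct z₁-keys occurring in that fiber, of the counts of distinct A-values of the z₁-fibers: ((T.filter (fun t => p (z₁ t) = x)).map A).toFinset.card = ∑ y ∈ ((T.filter (fun t => p (z₁ t) = x)).map z₁).toFinset, ((T.filter (fun t => z₁ t = y)).map A).toFinset.card. (Summarizability with COUNTDISTINCT and SUM.) -/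
/-! On the fiber of `p ∘ z₁` over `x`, the dependency says that `A` determines `z₁`. Hence the
sets of `A`-values of the distinct `z₁`-fibers inside it are pairwise disjoint, and their union is
the set of `A`-values of the whole fiber. Each such `z₁`-fiber is already a full `z₁`-fiber of `T`,
because `z₁ t = y` forces `p (z₁ t) = p y = x`. -/

namespace Multiset

variable {α β κ : Type*} [DecidableEq β] [DecidableEq κ]

theorem toFinset_map_eq_biUnion_fiber (S : Multiset α) (f : α → β) (g : α → κ) :
    (S.map f).toFinset =
      (S.map g).toFinset.biUnion fun y => ((S.filter (g · = y)).map f).toFinset := by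
  ext b
  simp only [Finset.mem_biUnion, mem_toFinset, mem_map, mem_filter]
  constructor
  · rintro ⟨t, ht, rfl⟩
    exact ⟨g t, ⟨t, ht, rfl⟩, t, ⟨ht, rfl⟩, rfl⟩
  · rintro ⟨_, _, t, ⟨ht, _⟩, rfl⟩
    exact ⟨t, ht, rfl⟩

theorem card_toFinset_map_eq_sum_fiber (S : Multiset α) (f : α → β) (g : α → κ)
    (hfg : ∀ s ∈ S, ∀ t ∈ S, f s = f t → g s = g t) :
    (S.map f).toFinset.card =
      ∑ y ∈ (S.map g).toFinset, ((S.filter (g · = y)).map f).toFinset.card := by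
  rw [toFinset_map_eq_biUnion_fiber S f g]
  refine Finset.card_biUnion fun y₁ _ y₂ _ hne => Finset.disjoint_left.2 ?_
  simp only [mem_toFinset, mem_map, mem_filter]
  rintro _ ⟨s, ⟨hs, rfl⟩, rfl⟩ ⟨t, ⟨ht, rfl⟩, hts⟩
  exact hne (hfg s hs t ht hts.symm)

theorem filter_filter_comp_of_eq {κ' : Type*} [DecidableEq κ'] (T : Multiset α) (g : α → κ)
    (p : κ → κ') {x : κ'} {y : κ} (hy : p y = x) :
    (T.filter (fun t => p (g t) = x)).filter (g · = y) = T.filter (g · = y) := by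
  rw [filter_filter]
  exact filter_congr fun t _ => and_iff_left_of_imp fun hty => hty ▸ hy

end Multiset

/-- Summarizability with COUNTDISTINCT and SUM. -/
theorem countdistinct_sum_summarizable
    {α β κ₁ κ₂ : Type*} [DecidableEq β] [DecidableEq κ₁] [DecidableEq κ₂]
    (T : Multiset α) (A : α → β) (z₁ : α → κ₁) (p : κ₁ → κ₂)
    (hLFD : ∀ t₁ ∈ T, ∀ t₂ ∈ T, p (z₁ t₁) = p (z₁ t₂) → A t₁ = A t₂ → z₁ t₁ = z₁ t₂) :
    ∀ x : κ₂,
      ((T.filter (fun t => p (z₁ t) = x)).map A).toFinset.card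
        = ∑ y ∈ ((T.filter (fun t => p (z₁ t) = x)).map z₁).toFinset,
            ((T.filter (fun t => z₁ t = y)).map A).toFinset.card := by
  intro x
  have hA_determines_z₁ : ∀ s ∈ T.filter (fun t => p (z₁ t) = x),
      ∀ t ∈ T.filter (fun t => p (z₁ t) = x), A s = A t → z₁ s = z₁ t := by
    simp only [Multiset.mem_filter]
    rintro s ⟨hs, hsx⟩ t ⟨ht, htx⟩
    exact hLFD s hs t ht (hsx.trans htx.symm)
  rw [Multiset.card_toFinset_map_eq_sum_fiber _ A z₁ hA_determines_z₁]
  refine Finset.sum_congr rfl fun y hy => ?_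
  obtain ⟨t, ht, rfl⟩ := Multiset.mem_map.1 (Multiset.mem_toFinset.1 hy)
  rw [Multiset.filter_filter_comp_of_eq T z₁ p (Multiset.mem_filter.1 ht).2]
end

section
/- Let T : Multiset α be an analytic table, A : α → β an attribute, and z₁ : α → κ₁ a grouping key (grouping set Y). Let K : α → κ₀ be a key such that K together with A literally determines z₁, i.e., for all t₁, t₂ ∈ T, if K t₁ = K t₂ and A t₁ = A t₂ then z₁ t₁ = z₁ t₂. Then for every intermediate grouping key z₂ : α → κ₂ that is coarser than z₁ and at least as fine as K (i.e., z₂ = p ∘ z₁ for some p : κ₁ → κ₂ and K = q ∘ z₂ for some q : κ₂ → κ₀) and for every x : κ₂: ((T.filter (fun t => z₂ t = x)).map A).toFinset.card = ∑ y ∈ ((T.filter (fun t => z₂ t = x)).map z₁).toFinset, ((T.filter (fun t => z₁ t = y)).map A).toFinset.card. That is, summing the per-z₁-group COUNTDISTINCT of A over any grouping set containing Y − X' (where X' is the part of Y removed to form K) reproduces the direct COUNTDISTINCT of A. (Correctness of the COUNTDISTINCT propagation rule preserving summarizability.) -/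
/-!
Inside a `z₂`-group, `z₂` and hence `K` is constant, so by `hK` the value of `A` determines the
`z₁`-group of a tuple. The distinct `A`-values of the `z₂`-group therefore split disjointly along
its `z₁`-subgroups, and since `z₂` factors through `z₁`, each of these subgroups is a whole
`z₁`-group of `T`.
-/

namespace Multiset

variable {α β γ : Type*} [DecidableEq β] [DecidableEq γ]

theorem toFinset_map_eq_biUnion_fibers (S : Multiset α) (f : α → β) (g : α → γ) :
    (S.map f).toFinset
      = (S.map g).toFinset.biUnion fun y => ((S.filter (g · = y)).map f).toFinset := by
  ext b
  simp only [Finset.mem_biUnion, mem_toFinset, mem_map, mem_filter]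
  constructor
  · rintro ⟨t, ht, rfl⟩
    exact ⟨g t, ⟨t, ht, rfl⟩, t, ⟨ht, rfl⟩, rfl⟩
  · rintro ⟨-, -, t, ⟨ht, -⟩, rfl⟩
    exact ⟨t, ht, rfl⟩

theorem card_toFinset_map_eq_sum_fibers (S : Multiset α) (f : α → β) (g : α → γ)
    (hfg : ∀ t₁ ∈ S, ∀ t₂ ∈ S, f t₁ = f t₂ → g t₁ = g t₂) :
    (S.map f).toFinset.card
      = ∑ y ∈ (S.map g).toFinset, ((S.filter (g · = y)).map f).toFinset.card := by
  rw [toFinset_map_eq_biUnion_fibers S f g, Finset.card_biUnion]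
  intro y₁ _ y₂ _ hne
  refine Finset.disjoint_left.2 fun b hb₁ hb₂ => hne ?_
  simp only [mem_toFinset, mem_map, mem_filter] at hb₁ hb₂
  obtain ⟨t₁, ⟨ht₁, rfl⟩, rfl⟩ := hb₁
  obtain ⟨t₂, ⟨ht₂, rfl⟩, hf⟩ := hb₂
  exact hfg t₁ ht₁ t₂ ht₂ hf.symm

theorem filter_filter_comp_eq_filter {κ : Type*} [DecidableEq κ] (T : Multiset α)
    (g : α → γ) (p : γ → κ) {x : κ} {y : γ} (hy : p y = x) :
    (T.filter (fun t => p (g t) = x)).filter (g · = y) = T.filter (g · = y) := by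
  rw [filter_filter]
  exact filter_congr fun t _ => and_iff_left_of_imp fun ht => by rwa [ht]

end Multiset

/-- Correctness of the COUNTDISTINCT propagation rule preserving summarizability. -/
theorem countdistinct_propagation_rule
    {α β κ₀ κ₁ κ₂ : Type*} [DecidableEq β] [DecidableEq κ₁] [DecidableEq κ₂]
    (T : Multiset α) (A : α → β) (z₁ : α → κ₁) (K : α → κ₀)
    (hK : ∀ t₁ ∈ T, ∀ t₂ ∈ T, K t₁ = K t₂ → A t₁ = A t₂ → z₁ t₁ = z₁ t₂)
    (z₂ : α → κ₂) (p : κ₁ → κ₂) (q : κ₂ → κ₀)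
    (hcoarser : z₂ = p ∘ z₁) (hfiner : K = q ∘ z₂) :
    ∀ x : κ₂,
      ((T.filter (fun t => z₂ t = x)).map A).toFinset.card
        = ∑ y ∈ ((T.filter (fun t => z₂ t = x)).map z₁).toFinset,
            ((T.filter (fun t => z₁ t = y)).map A).toFinset.card := by
  subst hcoarser hfiner
  intro x
  simp only [Function.comp_apply] at hK ⊢
  have hA_determines_z₁ : ∀ t₁ ∈ T.filter (fun t => p (z₁ t) = x),
      ∀ t₂ ∈ T.filter (fun t => p (z₁ t) = x), A t₁ = A t₂ → z₁ t₁ = z₁ t₂ := by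
    intro t₁ ht₁ t₂ ht₂ hA
    rw [Multiset.mem_filter] at ht₁ ht₂
    exact hK t₁ ht₁.1 t₂ ht₂.1 (by simp [ht₁.2, ht₂.2]) hA
  rw [Multiset.card_toFinset_map_eq_sum_fibers _ A z₁ hA_determines_z₁]
  refine Finset.sum_congr rfl fun y hy => ?_
  obtain ⟨t, ht, rfl⟩ := Multiset.mem_map.1 (Multiset.mem_toFinset.1 hy)
  rw [Multiset.filter_filter_comp_eq_filter T z₁ p (Multiset.mem_filter.1 ht).2]
end

section
/- Let T : Multiset α and T' : Multiset γ be analytic tables with key functions k : α → κ and k' : γ → κ, and let rightJoin T T' : Multiset (Option α × γ) be their right-merge. If the literal functional dependency X ↦ A holds in T, for X : α → κd and A : α → β, then the corresponding LFD holds among the (possibly null-padded) left components of the right-merge under literal equality: for all r₁, r₂ ∈ rightJoin T T', Option.map X r₁.1 = Option.map X r₂.1 implies Option.map A r₁.1 = Option.map A r₂.1. (Right-merge queries preserve literal functional dependencies among attributes of the left table, with null markers literally equal only to null markers.) -/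
/-- The right-merge (natural right outer join) of two analytic tables. -/
def rightJoin {α γ κ : Type*} [DecidableEq α] [DecidableEq κ]
    (T : Multiset α) (T' : Multiset γ) (k : α → κ) (k' : γ → κ) :
    Multiset (Option α × γ) :=
  T'.bind (fun t' =>
    let m := T.filter (fun t => k t = k' t')
    if m = 0 then {(none, t')} else m.map (fun t => (some t, t')))

lemma rightJoin_fst_mem {α γ κ : Type*} [DecidableEq α] [DecidableEq κ]
    {T : Multiset α} {T' : Multiset γ} {k : α → κ} {k' : γ → κ}
    {r : Option α × γ} (hr : r ∈ rightJoin T T' k k') {a : α} (ha : r.1 = some a) :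
    a ∈ T := by
  rw [rightJoin, Multiset.mem_bind] at hr
  obtain ⟨t', _, hmem⟩ := hr
  simp only at hmem
  split at hmem
  · simp only [Multiset.mem_singleton] at hmem
    rw [hmem] at ha; simp at ha
  · rw [Multiset.mem_map] at hmem
    obtain ⟨t, ht, rfl⟩ := hmem
    simp only at ha
    cases ha
    exact Multiset.mem_of_mem_filter ht

/-- Right-merge queries preserve literal functional dependencies among attributes
of the left table, with null markers literally equal only to null markers. -/
theorem rightJoin_preserves_LFD
    {α γ κ κd β : Type*} [DecidableEq α] [DecidableEq κ]
    (T : Multiset α) (T' : Multiset γ) (k : α → κ) (k' : γ → κ)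
    (X : α → κd) (A : α → β)
    (hLFD : ∀ t₁ ∈ T, ∀ t₂ ∈ T, X t₁ = X t₂ → A t₁ = A t₂) :
    ∀ r₁ ∈ rightJoin T T' k k', ∀ r₂ ∈ rightJoin T T' k k',
      Option.map X r₁.1 = Option.map X r₂.1 → Option.map A r₁.1 = Option.map A r₂.1 := by
  intro r₁ h₁ r₂ h₂ hX
  match e₁ : r₁.1, e₂ : r₂.1 with
  | none, none => simp
  | none, some a₂ => simp [e₁, e₂] at hX
  | some a₁, none => simp [e₁, e₂] at hX
  | some a₁, some a₂ =>
    rw [e₁, e₂] at hX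
    simp only [Option.map_some, Option.some_inj] at hX ⊢
    exact hLFD a₁ (rightJoin_fst_mem h₁ e₁) a₂ (rightJoin_fst_mem h₂ e₂) hX
end

section
/- Let T : Multiset α and T' : Multiset γ be analytic tables with key functions k : α → κ and k' : γ → κ, and let fullJoin T T' : Multiset (Option α × Option γ) be their full merge. If the literal functional dependency X ↦ A holds in T, for X : α → κd and A : α → β, then for all r₁, r₂ ∈ fullJoin T T', Option.map X r₁.1 = Option.map X r₂.1 implies Option.map A r₁.1 = Option.map A r₂.1. -/
/-- The left-merge (natural left outer join) of two analytic tables. -/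
def leftJoin {α γ κ : Type*} [DecidableEq γ] [DecidableEq κ]
    (T : Multiset α) (T' : Multiset γ) (k : α → κ) (k' : γ → κ) :
    Multiset (α × Option γ) :=
  T.bind (fun t =>
    let m := T'.filter (fun t' => k' t' = k t)
    if m = 0 then {(t, none)} else m.map (fun t' => (t, some t')))

/-- The full merge (natural full outer join) of two analytic tables. -/
def fullJoin {α γ κ : Type*} [DecidableEq γ] [DecidableEq κ]
    (T : Multiset α) (T' : Multiset γ) (k : α → κ) (k' : γ → κ) :
    Multiset (Option α × Option γ) :=
  (leftJoin T T' k k').map (fun r => (some r.1, r.2))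
    + (T'.filter (fun t' => ∀ t ∈ T, k t ≠ k' t')).map
        (fun t' => ((none : Option α), some t'))

/-- Full-merge queries preserve literal functional dependencies among attributes
of the left table, with null markers literally equal only to null markers. -/
theorem fullJoin_preserves_LFD
    {α γ κ κd β : Type*} [DecidableEq γ] [DecidableEq κ]
    (T : Multiset α) (T' : Multiset γ) (k : α → κ) (k' : γ → κ)
    (X : α → κd) (A : α → β)
    (hLFD : ∀ t₁ ∈ T, ∀ t₂ ∈ T, X t₁ = X t₂ → A t₁ = A t₂) :
    ∀ r₁ ∈ fullJoin T T' k k', ∀ r₂ ∈ fullJoin T T' k k',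
      Option.map X r₁.1 = Option.map X r₂.1 → Option.map A r₁.1 = Option.map A r₂.1 := by
  have hfst : ∀ r ∈ fullJoin T T' k k', r.1 = none ∨ ∃ t ∈ T, r.1 = some t := by
    intro r hr
    rw [fullJoin, Multiset.mem_add] at hr
    rcases hr with hr | hr
    · obtain ⟨r', hr', rfl⟩ := Multiset.mem_map.mp hr
      right
      rw [leftJoin, Multiset.mem_bind] at hr'
      obtain ⟨t, ht, hmem⟩ := hr'
      refine ⟨t, ht, ?_⟩
      simp only at hmem
      split at hmem
      · simp at hmem; simp [hmem]
      · obtain ⟨t', _, h⟩ := Multiset.mem_map.mp hmem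
        simp [← h]
    · obtain ⟨t', _, rfl⟩ := Multiset.mem_map.mp hr
      left; rfl
  intro r₁ h₁ r₂ h₂ hX
  rcases hfst r₁ h₁ with h | ⟨t₁, ht₁, e₁⟩ <;> rcases hfst r₂ h₂ with h' | ⟨t₂, ht₂, e₂⟩ <;>
    simp_all [Option.map]
  exact hLFD t₁ ht₁ t₂ ht₂ hX
end

section
/- Let T : Multiset α be an analytic table, z : α → κ a grouping key, and P a decidable predicate on α that factors through z, i.e., there is Q : κ → Prop with P t ↔ Q (z t) for all t ∈ T. Then for every aggregation function F : Multiset β → γ, every attribute A : α → β, and every x : κ such that the fiber (T.filter P).filter (fun t => z t = x) of the filtered table is nonempty, the aggregate of A computed on the filtered table equals the aggregate computed on the original table: F (((T.filter P).filter (fun t => z t = x)).map A) = F ((T.filter (fun t => z t = x)).map A). (G-summarizability of every attribute with respect to a filter query whose predicate attributes are contained in the grouping set.) -/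
/-- G-summarizability of every attribute with respect to a filter query whose
predicate attributes are contained in the grouping set. -/
theorem filter_g_summarizable
    {α β γ κ : Type*} [DecidableEq κ]
    (T : Multiset α) (z : α → κ) (P : α → Prop) [DecidablePred P]
    (Q : κ → Prop) (hPQ : ∀ t ∈ T, P t ↔ Q (z t))
    (F : Multiset β → γ) (A : α → β) :
    ∀ x : κ, (T.filter P).filter (fun t => z t = x) ≠ 0 →
      F (((T.filter P).filter (fun t => z t = x)).map A)
        = F ((T.filter (fun t => z t = x)).map A) := by
  intro x hne
  obtain ⟨t, ht⟩ := Multiset.exists_mem_of_ne_zero hne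
  rw [Multiset.mem_filter, Multiset.mem_filter] at ht
  obtain ⟨⟨htT, htP⟩, htz⟩ := ht
  have hQx : Q x := htz ▸ (hPQ t htT).mp htP
  congr 1
  rw [Multiset.filter_filter]
  congr 1
  apply Multiset.filter_congr
  intro s hs
  constructor
  · rintro ⟨hz, _⟩; exact hz
  · intro hz; exact ⟨hz, (hPQ s hs).mpr (hz ▸ hQx)⟩
end

section
/- Let T : Multiset α and T' : Multiset γ be analytic tables with key functions k : α → κ and k' : γ → κ. Then for every grouping key z : α → κz on the left table and every x : κz, the set of distinct left tuples appearing in the corresponding fiber of the left-merge equals the set of distinct tuples of the corresponding fiber of T: (((leftJoin T T').filter (fun r => z r.1 = x)).map Prod.fst).toFinset = (T.filter (fun t => z t = x)).toFinset. Consequently duplicate-insensitive aggregation functions (COUNTDISTINCT, MIN, MAX) of attributes of T computed on the left-merge agree with those computed on T, even when right-table tuples match several left tuples. (G-summarizability of left-table attributes with respect to a left-merge query for duplicate-insensitive functions.) -/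
/-- G-summarizability of left-table attributes with respect to a left-merge query
for duplicate-insensitive functions. -/
theorem leftJoin_fiber_toFinset
    {α γ κ κz : Type*} [DecidableEq α] [DecidableEq γ] [DecidableEq κ] [DecidableEq κz]
    (T : Multiset α) (T' : Multiset γ) (k : α → κ) (k' : γ → κ) :
    ∀ (z : α → κz) (x : κz),
      (((leftJoin T T' k k').filter (fun r => z r.1 = x)).map Prod.fst).toFinset
        = (T.filter (fun t => z t = x)).toFinset := by
  intro z x
  ext a
  simp only [Multiset.mem_toFinset, Multiset.mem_map, Multiset.mem_filter,
    leftJoin, Multiset.mem_bind]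
  constructor
  · rintro ⟨r, ⟨⟨t, ht, hr⟩, hz⟩, rfl⟩
    split_ifs at hr with h
    · simp only [Multiset.mem_singleton] at hr
      subst hr
      exact ⟨ht, hz⟩
    · simp only [Multiset.mem_map] at hr
      obtain ⟨t', _, rfl⟩ := hr
      exact ⟨ht, hz⟩
  · rintro ⟨ha, hz⟩
    by_cases h : T'.filter (fun t' => k' t' = k a) = 0
    · exact ⟨(a, none), ⟨⟨a, ha, by simp [h]⟩, hz⟩, rfl⟩
    · obtain ⟨t', ht'⟩ := Multiset.exists_mem_of_ne_zero h
      exact ⟨(a, some t'), ⟨⟨a, ha, by rw [if_neg h]; exact Multiset.mem_map_of_mem _ ht'⟩, hz⟩, rfl⟩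
end

section
/- Let T, T' : Multiset α be analytic tables over the same schema, g : α → κg the projection onto the highest dimension attributes, and suppose their g-images are disjoint: Disjoint ((T.map g).toFinset) ((T'.map g).toFinset). Let z : α → κ be any grouping key at least as fine as g (i.e., g = q ∘ z for some q : κ → κg). Then every fiber of the union T + T' equals the corresponding fiber of one of the operands: for every x : κ, (T + T').filter (fun t => z t = x) = T.filter (fun t => z t = x) or (T + T').filter (fun t => z t = x) = T'.filter (fun t => z t = x). (G-summarizability of attributes with respect to a union query whose operands have disjoint top-level key sets.) -/
/-- G-summarizability of attributes with respect to a union query whose operands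
have disjoint top-level key sets. -/
theorem union_fiber_cases
    {α κg κ : Type*} [DecidableEq κg] [DecidableEq κ]
    (T T' : Multiset α) (g : α → κg)
    (hdisj : Disjoint ((T.map g).toFinset) ((T'.map g).toFinset))
    (z : α → κ) (q : κ → κg) (hfine : g = q ∘ z) :
    ∀ x : κ,
      (T + T').filter (fun t => z t = x) = T.filter (fun t => z t = x)
        ∨ (T + T').filter (fun t => z t = x) = T'.filter (fun t => z t = x) := by
  intro x
  rw [Multiset.filter_add]
  by_cases h : T'.filter (fun t => z t = x) = 0
  · left; rw [h, add_zero]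
  · right
    rcases Multiset.exists_mem_of_ne_zero h with ⟨t', ht'⟩
    rw [Multiset.mem_filter] at ht'
    have hT : T.filter (fun t => z t = x) = 0 := by
      rw [Multiset.filter_eq_nil]
      intro t ht hzt
      have : g t ∈ (T.map g).toFinset := by
        simp [Multiset.mem_toFinset]; exact ⟨t, ht, rfl⟩
      have h2 : g t' ∈ (T'.map g).toFinset := by
        simp [Multiset.mem_toFinset]; exact ⟨t', ht'.1, rfl⟩
      have heq : g t = g t' := by
        simp only [hfine, Function.comp, hzt, ht'.2]
      rw [heq] at this
      exact (Finset.disjoint_left.mp hdisj this) h2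
    rw [hT, zero_add]
end

section
/- Let T, T' : Finset α be analytic tables (without duplicate tuples) over the same schema, g : α → κg the projection onto the highest dimension attributes, and suppose every g-fiber of T is either equal to or disjoint from the corresponding g-fiber of T': for all yv : κg, T.filter (fun t => g t = yv) = T'.filter (fun t => g t = yv) or Disjoint (T.filter (fun t => g t = yv)) (T'.filter (fun t => g t = yv)). Let z : α → κ be any grouping key at least as fine as g (g = q ∘ z for some q : κ → κg). Then every fiber of the set difference T \ T' is either the corresponding fiber of T or empty: for every x : κ, (T \ T').filter (fun t => z t = x) = T.filter (fun t => z t = x) or (T \ T').filter (fun t => z t = x) = ∅. (G-summarizability of attributes with respect to a difference query.) -/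
/-- G-summarizability of attributes with respect to a difference query. -/
theorem difference_fiber_cases
    {α κg κ : Type*} [DecidableEq α] [DecidableEq κg] [DecidableEq κ]
    (T T' : Finset α) (g : α → κg)
    (hfib : ∀ yv : κg,
      T.filter (fun t => g t = yv) = T'.filter (fun t => g t = yv)
        ∨ Disjoint (T.filter (fun t => g t = yv)) (T'.filter (fun t => g t = yv)))
    (z : α → κ) (q : κ → κg) (hfine : g = q ∘ z) :
    ∀ x : κ,
      (T \ T').filter (fun t => z t = x) = T.filter (fun t => z t = x)
        ∨ (T \ T').filter (fun t => z t = x) = ∅ := by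
  intro x
  have hg : ∀ t : α, z t = x → g t = q x := by
    intro t ht; rw [hfine]; simp [ht]
  rcases hfib (q x) with heq | hdis
  · right
    ext t
    simp only [Finset.mem_filter, Finset.mem_sdiff, Finset.notMem_empty, iff_false]
    rintro ⟨⟨hT, hT'⟩, hz⟩
    have : t ∈ T'.filter (fun t => g t = q x) := by
      rw [← heq]; exact Finset.mem_filter.2 ⟨hT, hg t hz⟩
    exact hT' (Finset.mem_filter.1 this).1
  · left
    ext t
    simp only [Finset.mem_filter, Finset.mem_sdiff]
    constructor
    · rintro ⟨⟨hT, _⟩, hz⟩; exact ⟨hT, hz⟩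
    · rintro ⟨hT, hz⟩
      refine ⟨⟨hT, fun hT' => ?_⟩, hz⟩
      exact Finset.disjoint_left.1 hdis
        (Finset.mem_filter.2 ⟨hT, hg t hz⟩)
        (Finset.mem_filter.2 ⟨hT', hg t hz⟩)
end

section
/- Let T : Multiset α and T' : Multiset γ be analytic tables with key functions k : α → κ and k' : γ → κ, and let innerJoin T T' : Multiset (α × γ) be their strict merge. Then for every join-key value y : κ for which some right tuple matches (∃ t' ∈ T', k' t' = y), the set of distinct left tuples appearing in the y-fiber of the strict merge equals the set of distinct tuples of the y-fiber of T: (((innerJoin T T').filter (fun r => k r.1 = y)).map Prod.fst).toFinset = (T.filter (fun t => k t = y)).toFinset. (For grouping sets containing all join attributes, the nonempty partitions of a strict-merge result project, up to duplicates, exactly onto the corresponding partitions of the left table.) -/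
/-- The strict merge (natural inner join) of two analytic tables. -/
def innerJoin {α γ κ : Type*} [DecidableEq κ]
    (T : Multiset α) (T' : Multiset γ) (k : α → κ) (k' : γ → κ) :
    Multiset (α × γ) :=
  T.bind (fun t => (T'.filter (fun t' => k' t' = k t)).map (fun t' => (t, t')))

/-- For grouping sets containing all join attributes, the nonempty partitions of
a strict-merge result project, up to duplicates, exactly onto the corresponding
partitions of the left table. -/
theorem innerJoin_key_fiber_toFinset
    {α γ κ : Type*} [DecidableEq α] [DecidableEq κ]
    (T : Multiset α) (T' : Multiset γ) (k : α → κ) (k' : γ → κ) :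
    ∀ y : κ, (∃ t' ∈ T', k' t' = y) →
      (((innerJoin T T' k k').filter (fun r => k r.1 = y)).map Prod.fst).toFinset
        = (T.filter (fun t => k t = y)).toFinset := by
  intro y ⟨w, hw, hwy⟩
  ext x
  simp only [Multiset.mem_toFinset, Multiset.mem_map, Multiset.mem_filter,
    innerJoin, Multiset.mem_bind]
  constructor
  · rintro ⟨⟨a, b⟩, ⟨⟨t, ht, t', ⟨_, _⟩, he⟩, hk⟩, rfl⟩
    cases he
    exact ⟨ht, hk⟩
  · rintro ⟨hx, hk⟩
    exact ⟨(x, w), ⟨⟨x, hx, w, ⟨hw, by rw [hwy, hk]⟩, rfl⟩, hk⟩, rfl⟩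
end

section
/- Let T : Multiset α and T' : Multiset γ be analytic tables with key functions k : α → κ and k' : γ → κ such that every left tuple has at least one join partner: for all t ∈ T there exists t' ∈ T' with k' t' = k t. Then for every grouping key z : α → κz on the left table and every x : κz, the set of distinct left tuples appearing in the corresponding fiber of the strict merge equals the set of distinct tuples of the corresponding fiber of T: (((innerJoin T T').filter (fun r => z r.1 = x)).map Prod.fst).toFinset = (T.filter (fun t => z t = x)).toFinset. (When the right table's join-key values cover those of the left table, every partition of a strict-merge result projects, up to duplicates, onto the corresponding partition of the left table, for any grouping set.) -/
/-- When the right table's join-key values cover those of the left table, every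
partition of a strict-merge result projects, up to duplicates, onto the
corresponding partition of the left table, for any grouping set. -/
theorem innerJoin_fiber_toFinset_of_cover
    {α γ κ κz : Type*} [DecidableEq α] [DecidableEq κ] [DecidableEq κz]
    (T : Multiset α) (T' : Multiset γ) (k : α → κ) (k' : γ → κ)
    (hcover : ∀ t ∈ T, ∃ t' ∈ T', k' t' = k t) :
    ∀ (z : α → κz) (x : κz),
      (((innerJoin T T' k k').filter (fun r => z r.1 = x)).map Prod.fst).toFinset
        = (T.filter (fun t => z t = x)).toFinset := by
  intro z x
  ext a
  simp only [Multiset.mem_toFinset, Multiset.mem_map, Multiset.mem_filter,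
    innerJoin, Multiset.mem_bind]
  constructor
  · rintro ⟨⟨a', b⟩, ⟨⟨t, ht, hmem⟩, hz⟩, rfl⟩
    obtain ⟨t', hmem', heq⟩ := hmem
    cases heq
    exact ⟨ht, hz⟩
  · rintro ⟨ha, hz⟩
    obtain ⟨t', ht', hk⟩ := hcover a ha
    exact ⟨(a, t'), ⟨⟨a, ha, ⟨t', ⟨ht', hk⟩, rfl⟩⟩, hz⟩, rfl⟩
end
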